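/- Let f : D → [0,∞) be measurable on a bounded measurable set D ⊆ R^N. Then for every measurable subset E ⊆ D, ∫_E f dx ≥ ∫_0^{|E|} f_Δ(s) ds, where f_Δ is the increasing rearrangement of f. -/
import Mathlib


open MeasureTheory

/-- Decreasing rearrangement `f^Δ(s) = max {α ≥ 0 : |{f ≥ α}| ≥ s}`. -/
noncomputable def decRearr {N : ℕ} (D : Set (EuclideanSpace ℝ (Fin N)))
    (f : EuclideanSpace ℝ (Fin N) → ℝ) (s : ℝ) : ℝ :=
  sSup {α : ℝ | 0 ≤ α ∧ ENNReal.ofReal s ≤ volume {x ∈ D | α ≤ f x}}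

/-- Increasing rearrangement `f_Δ(s) = f^Δ(|D| − s)`. -/
noncomputable def incRearr {N : ℕ} (D : Set (EuclideanSpace ℝ (Fin N)))
    (f : EuclideanSpace ℝ (Fin N) → ℝ) (s : ℝ) : ℝ :=
  decRearr D f ((volume D).toReal - s)

theorem stmt2 {N : ℕ} (D : Set (EuclideanSpace ℝ (Fin N)))
    (hDmeas : MeasurableSet D) (hDbd : Bornology.IsBounded D)
    (f : EuclideanSpace ℝ (Fin N) → ℝ)
    (hfmeas : Measurable f) (hfnn : ∀ x ∈ D, 0 ≤ f x)
    (hfint : IntegrableOn f D volume)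
    (E : Set (EuclideanSpace ℝ (Fin N))) (hE : MeasurableSet E) (hED : E ⊆ D) :
    (∫ s in Set.Ioo 0 ((volume E).toReal), incRearr D f s) ≤ ∫ x in E, f x := by
  classical
  set c := (volume D).toReal with hc
  set m := (volume E).toReal with hm
  have hDfin : volume D < ⊤ := hDbd.measure_lt_top
  have hEfin : volume E < ⊤ := lt_of_le_of_lt (measure_mono hED) hDfin
  have hmc : m ≤ c := ENNReal.toReal_mono hDfin.ne (measure_mono hED)
  have hg0 : ∀ s, 0 ≤ incRearr D f s := fun s =>
    Real.sSup_nonneg (fun α hα => hα.1)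
  by_cases hInt : IntegrableOn (incRearr D f) (Set.Ioo 0 m) volume
  · have hfE : IntegrableOn f E volume := hfint.mono_set hED
    have hfE0 : 0 ≤ᵐ[volume.restrict E] f :=
      ae_restrict_of_forall_mem hE (fun x hx => hfnn x (hED hx))
    have hg0' : 0 ≤ᵐ[volume.restrict (Set.Ioo 0 m)] (incRearr D f) :=
      Filter.Eventually.of_forall hg0
    rw [MeasureTheory.integral_eq_lintegral_of_nonneg_ae hfE0 hfE.aestronglyMeasurable,
      MeasureTheory.integral_eq_lintegral_of_nonneg_ae hg0' hInt.aestronglyMeasurable]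
    apply ENNReal.toReal_mono hfE.lintegral_lt_top.ne
    rw [lintegral_eq_lintegral_meas_le _ hg0' hInt.aestronglyMeasurable.aemeasurable,
      lintegral_eq_lintegral_meas_le _ hfE0 hfmeas.aemeasurable]
    refine lintegral_mono_ae (ae_restrict_of_forall_mem measurableSet_Ioi ?_)
    intro t ht
    rw [Measure.restrict_apply' measurableSet_Ioo, Measure.restrict_apply' hE]
    -- T n : approximating sets from below
    set T : ℕ → Set (EuclideanSpace ℝ (Fin N)) :=
      fun n => {x | t - 1 / (n + 1) ≤ f x} ∩ E with hT
    have hTfin : ∀ n, volume (T n) < ⊤ :=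
      fun n => lt_of_le_of_lt (measure_mono Set.inter_subset_right) hEfin
    have key : ∀ n : ℕ,
        volume ({s | t ≤ incRearr D f s} ∩ Set.Ioo 0 m) ≤ volume (T n) := by
      intro n
      set t' : ℝ := t - 1 / (n + 1) with ht'
      have ht't : t' < t := by
        have h0 : (0:ℝ) < 1 / (n + 1) := by positivity
        rw [ht']
        linarith
      set μt' := volume {x ∈ D | t' ≤ f x} with hμt'
      have hμt'le : μt' ≤ volume D := measure_mono (fun x hx => hx.1)
      have hμt'fin : μt' < ⊤ := lt_of_le_of_lt hμt'le hDfin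
      have hA : {s | t ≤ incRearr D f s} ∩ Set.Ioo 0 m ⊆
          Set.Icc (c - μt'.toReal) m := by
        rintro s ⟨hts, hs0, hsm⟩
        have hne : Set.Nonempty
            {α : ℝ | 0 ≤ α ∧ ENNReal.ofReal (c - s) ≤ volume {x ∈ D | α ≤ f x}} := by
          refine ⟨0, le_refl 0, ?_⟩
          have hD0 : {x ∈ D | (0:ℝ) ≤ f x} = D := by
            ext x
            exact ⟨fun hx => hx.1, fun hx => ⟨hx, hfnn x hx⟩⟩
          rw [hD0]
          calc ENNReal.ofReal (c - s) ≤ ENNReal.ofReal c :=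
                ENNReal.ofReal_le_ofReal (sub_le_self _ hs0.le)
            _ = volume D := ENNReal.ofReal_toReal hDfin.ne
        have hts' : t' < sSup
            {α : ℝ | 0 ≤ α ∧ ENNReal.ofReal (c - s) ≤ volume {x ∈ D | α ≤ f x}} :=
          lt_of_lt_of_le ht't hts
        obtain ⟨α, ⟨hα0, hαμ⟩, ht'α⟩ := exists_lt_of_lt_csSup hne hts'
        have h1 : ENNReal.ofReal (c - s) ≤ μt' :=
          le_trans hαμ (measure_mono (fun x hx => ⟨hx.1, le_trans ht'α.le hx.2⟩))
        have h2 : c - s ≤ μt'.toReal :=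
          (ENNReal.ofReal_le_iff_le_toReal hμt'fin.ne).mp h1
        exact ⟨sub_le_comm.mp h2, hsm.le⟩
      calc volume ({s | t ≤ incRearr D f s} ∩ Set.Ioo 0 m)
          ≤ volume (Set.Icc (c - μt'.toReal) m) := measure_mono hA
        _ = ENNReal.ofReal (m - (c - μt'.toReal)) := Real.volume_Icc
        _ ≤ volume (T n) := by
            have hsub : {x ∈ D | t' ≤ f x} ⊆ T n ∪ (D \ E) := by
              intro x hx
              by_cases hxE : x ∈ E
              · exact Or.inl ⟨hx.2, hxE⟩
              · exact Or.inr ⟨hx.1, hxE⟩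
            have h3 : μt' ≤ volume (T n) + volume (D \ E) :=
              le_trans (measure_mono hsub) (measure_union_le _ _)
            have hDE : volume (D \ E) = volume D - volume E :=
              measure_diff hED hE.nullMeasurableSet hEfin.ne
            have hDEfin : volume (D \ E) < ⊤ :=
              lt_of_le_of_lt (measure_mono Set.diff_subset) hDfin
            have h4 := ENNReal.toReal_mono
              (by exact (ENNReal.add_lt_top.mpr ⟨hTfin n, hDEfin⟩).ne) h3
            rw [ENNReal.toReal_add (hTfin n).ne hDEfin.ne, hDE,
              ENNReal.toReal_sub_of_le (measure_mono hED) hDfin.ne] at h4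
            have h5 : m - (c - μt'.toReal) ≤ (volume (T n)).toReal := by
              simp only [← hc, ← hm] at h4
              linarith
            calc ENNReal.ofReal (m - (c - μt'.toReal))
                ≤ ENNReal.ofReal ((volume (T n)).toReal) :=
                  ENNReal.ofReal_le_ofReal h5
              _ = volume (T n) := ENNReal.ofReal_toReal (hTfin n).ne
    have hanti : Antitone T := by
      intro n k hnk x hx
      simp only [hT, Set.mem_inter_iff, Set.mem_setOf_eq] at hx ⊢
      refine ⟨?_, hx.2⟩
      have h1 : (1:ℝ) / (k + 1) ≤ 1 / (n + 1) := by
        have : (n:ℝ) + 1 ≤ (k:ℝ) + 1 := by exact_mod_cast Nat.succ_le_succ hnk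
        apply one_div_le_one_div_of_le (by positivity) this
      have hx1 := hx.1
      linarith
    have hTmeas : ∀ n, NullMeasurableSet (T n) volume := fun n =>
      ((hfmeas measurableSet_Ici).inter hE).nullMeasurableSet
    have hiInter : ⋂ n, T n = {x | t ≤ f x} ∩ E := by
      ext x
      simp only [hT, Set.mem_iInter, Set.mem_inter_iff, Set.mem_setOf_eq]
      constructor
      · intro h
        refine ⟨?_, (h 0).2⟩
        by_contra hlt
        push_neg at hlt
        obtain ⟨n, hn⟩ := exists_nat_one_div_lt (sub_pos.mpr hlt)
        have h2 := (h n).1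
        linarith
      · rintro ⟨hxt, hxE⟩ n
        have : (0:ℝ) < 1 / (n + 1) := by positivity
        exact ⟨by linarith, hxE⟩
    calc volume ({s | t ≤ incRearr D f s} ∩ Set.Ioo 0 m)
        ≤ ⨅ n, volume (T n) := le_iInf key
      _ = volume (⋂ n, T n) := (hanti.measure_iInter hTmeas ⟨0, (hTfin 0).ne⟩).symm
      _ = volume ({x | t ≤ f x} ∩ E) := by rw [hiInter]
  · rw [integral_undef hInt]
    exact setIntegral_nonneg hE (fun x hx => hfnn x (hED hx))
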